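/- Let A be a finite set with |A| = n, let t ≥ 1 with t < n, and let P(n, t) be the program over atoms A consisting of all purely negative clauses (x, ∅, B) with x ∈ A, B ⊆ A ∖ {x} and |B| = t. Then the stable models of P(n, t) are exactly the subsets of A of cardinality n − t; in particular, P(n, t) has exactly binomial(n, t) stable models. -/
import Mathlib


/-- A clause of a propositional logic program: an optional head (a definite
clause if `head = some h`, a constraint if `head = none`), a positive body
and a negative body. -/
structure LPClause (α : Type) where
  head : Option α
  pos : Finset α
  neg : Finset α
deriving DecidableEq

/-- A program is a finite set of clauses. -/
abbrev LPProgram (α : Type) := Finset (LPClause α)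

/-- The atoms occurring in a clause. -/
def LPClause.atoms {α : Type} [DecidableEq α] (c : LPClause α) : Finset α :=
  c.head.toFinset ∪ c.pos ∪ c.neg

/-- The atoms occurring in a program. -/
def LPProgram.atoms {α : Type} [DecidableEq α] (P : LPProgram α) : Finset α :=
  P.sup LPClause.atoms

/-- `N` is closed under the Horn rules of the reduct `P^M`: for every definite
clause of `P` whose negative body is disjoint from `M`, if its positive body
is contained in `N` then so is its head. -/
def ClosedUnder {α : Type} (P : LPProgram α) (M : Finset α) (N : Set α) : Prop :=
  ∀ c ∈ P, ∀ h : α, c.head = some h → (∀ b ∈ c.neg, b ∉ M) →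
    (↑c.pos : Set α) ⊆ N → h ∈ N

/-- `M` is a stable model of `P`: `M` is the least set closed under the rules
of the reduct `P^M` (i.e. `M = lm(P^M)`), and `M` satisfies every constraint
of `P`. -/
def IsStable {α : Type} (P : LPProgram α) (M : Finset α) : Prop :=
  ClosedUnder P M ↑M ∧ (∀ N : Set α, ClosedUnder P M N → ↑M ⊆ N) ∧
  ∀ c ∈ P, c.head = none → ¬(c.pos ⊆ M ∧ ∀ b ∈ c.neg, b ∉ M)

/-- The stable models of the program `P(n,t)`, consisting of all purely
negative clauses `x ← not(b₁), …, not(b_t)` with `x ∈ A` and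
`{b₁,…,b_t} ⊆ A \ {x}`, are exactly the subsets of `A` of cardinality `n - t`;
in particular there are exactly `n.choose t` of them. -/
theorem stmt_7 {α : Type} [DecidableEq α] (A : Finset α) (n t : ℕ)
    (hA : A.card = n) (ht : 1 ≤ t) (htn : t < n)
    (P : LPProgram α)
    (hP : ∀ c, c ∈ P ↔ ∃ x ∈ A, ∃ B : Finset α,
      B ⊆ A \ {x} ∧ B.card = t ∧ c = ⟨some x, ∅, B⟩) :
    (∀ M : Finset α, IsStable P M ↔ M ⊆ A ∧ M.card = n - t) ∧
    {M : Finset α | IsStable P M}.ncard = n.choose t := by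

  have key : ∀ M : Finset α, IsStable P M ↔ M ⊆ A ∧ M.card = n - t := by
    intro M
    constructor
    · rintro ⟨hcl, hmin, -⟩
      have hMA : M ⊆ A := by
        have hsub : (↑M : Set α) ⊆ ↑A := by
          apply hmin
          intro c hc h hh hneg hpos
          obtain ⟨x, hx, B, hB, hBc, rfl⟩ := (hP c).1 hc
          simp only [Option.some.injEq] at hh
          subst hh
          exact_mod_cast hx
        intro a ha
        exact_mod_cast hsub (by exact_mod_cast ha)
      have h1 : (A \ M).card ≤ t := by
        by_contra hgt
        push_neg at hgt
        obtain ⟨x, hxAM⟩ : ∃ x, x ∈ A \ M := Finset.card_pos.1 (by omega)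
        have hcard' : t ≤ ((A \ M) \ {x}).card := by
          have hle : (A \ M).card - 1 ≤ ((A \ M) \ {x}).card := by
            have := Finset.le_card_sdiff {x} (A \ M)
            calc (A \ M).card - 1 ≤ (A \ M).card - ({x} : Finset α).card := by
                  simp
              _ ≤ ((A \ M) \ {x}).card := Finset.le_card_sdiff _ _
          omega
        obtain ⟨B, hB, hBc⟩ := Finset.exists_subset_card_eq hcard'
        have hcP : (⟨some x, ∅, B⟩ : LPClause α) ∈ P := by
          rw [hP]
          refine ⟨x, (Finset.mem_sdiff.1 hxAM).1, B, ?_, hBc, rfl⟩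
          intro b hb
          have hb' := hB hb
          rw [Finset.mem_sdiff] at hb' ⊢
          exact ⟨(Finset.mem_sdiff.1 hb'.1).1, hb'.2⟩
        have hxM : x ∈ (↑M : Set α) := by
          apply hcl _ hcP x rfl
          · intro b hb
            exact (Finset.mem_sdiff.1 (Finset.mem_sdiff.1 (hB hb)).1).2
          · simp
        have : x ∉ M := (Finset.mem_sdiff.1 hxAM).2
        exact this (by exact_mod_cast hxM)
      have h2 : t ≤ (A \ M).card := by
        by_contra hlt
        push_neg at hlt
        have hempty : (↑M : Set α) ⊆ (∅ : Set α) := by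
          apply hmin
          intro c hc h hh hneg hpos
          obtain ⟨x, hx, B, hB, hBc, rfl⟩ := (hP c).1 hc
          exfalso
          have hBAM : B ⊆ A \ M := by
            intro b hb
            rw [Finset.mem_sdiff]
            exact ⟨(Finset.mem_sdiff.1 (hB hb)).1, hneg b hb⟩
          have := Finset.card_le_card hBAM
          omega
        have hM0 : M = ∅ := by
          rw [Finset.eq_empty_iff_forall_notMem]
          intro a ha
          exact hempty (by exact_mod_cast ha)
        rw [hM0, Finset.sdiff_empty, hA] at hlt
        omega
      have hMc : M.card ≤ A.card := Finset.card_le_card hMA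
      have := Finset.card_sdiff_of_subset hMA
      exact ⟨hMA, by omega⟩
    · rintro ⟨hMA, hMc⟩
      have hMcard : M.card ≤ A.card := Finset.card_le_card hMA
      have hdiff : (A \ M).card = t := by
        rw [Finset.card_sdiff_of_subset hMA]; omega
      refine ⟨?_, ?_, ?_⟩
      · intro c hc h hh hneg hpos
        obtain ⟨x, hx, B, hB, hBc, rfl⟩ := (hP c).1 hc
        simp only [Option.some.injEq] at hh
        subst hh
        have hBAM : B ⊆ A \ M := by
          intro b hb
          rw [Finset.mem_sdiff]
          exact ⟨(Finset.mem_sdiff.1 (hB hb)).1, hneg b hb⟩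
        have hBeq : B = A \ M :=
          Finset.eq_of_subset_of_card_le hBAM (by omega)
        have hxB : x ∉ B := fun hxB =>
          (Finset.mem_sdiff.1 (hB hxB)).2 (Finset.mem_singleton_self x)
        rw [hBeq, Finset.mem_sdiff] at hxB
        push_neg at hxB
        exact_mod_cast hxB hx
      · intro N hN a ha
        have haM : a ∈ M := by exact_mod_cast ha
        have hcP : (⟨some a, ∅, A \ M⟩ : LPClause α) ∈ P := by
          rw [hP]
          refine ⟨a, hMA haM, A \ M, ?_, hdiff, rfl⟩
          intro b hb
          rw [Finset.mem_sdiff] at hb ⊢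
          refine ⟨hb.1, ?_⟩
          simp only [Finset.mem_singleton]
          rintro rfl
          exact hb.2 haM
        apply hN _ hcP a rfl
        · intro b hb
          exact (Finset.mem_sdiff.1 hb).2
        · simp
      · intro c hc hnone
        obtain ⟨x, hx, B, hB, hBc, rfl⟩ := (hP c).1 hc
        simp at hnone
  refine ⟨key, ?_⟩
  have hset : {M : Finset α | IsStable P M} = ↑(A.powersetCard (n - t)) := by
    ext M
    simp [key, Finset.mem_powersetCard]
  rw [hset, Set.ncard_coe_finset, Finset.card_powersetCard, hA,
    Nat.choose_symm (le_of_lt htn)]
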